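/- Let f be a piecewise contracting interval map, injective on each contraction piece, with D ⊂ X̃. If x₀ ∈ X̃ is a periodic point of f, then there exists d ∈ D⁻ ∪ D⁺ (the set of lateral limits at the interior boundary points c_1,...,c_{N-1}) such that the orbit O(x₀) equals ω(d). -/

import Mathlib

open Filter Topology Set

/-- A piecewise contracting interval map on `X = [c 0, c N]` with contraction pieces
`X_i` delimited by the points `c 0 < c 1 < … < c N`, contraction rate `lam ∈ (0,1)`,
and `fe i` the (unique) continuous `lam`-Lipschitz extension of `f` restricted to the
`i`-th piece to its closure `[c (i-1), c i]`. The pieces are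
`X_1 = [c 0, c 1)`, `X_i = (c (i-1), c i)` for `1 < i < N`, `X_N = (c (N-1), c N]`. -/
structure PCIM where
  N : ℕ
  hN : 2 ≤ N
  c : ℕ → ℝ
  lam : ℝ
  f : ℝ → ℝ
  fe : ℕ → ℝ → ℝ
  hc : StrictMonoOn c (Set.Iic N)
  hlam : lam ∈ Set.Ioo (0 : ℝ) 1
  hmap : Set.MapsTo f (Set.Icc (c 0) (c N)) (Set.Icc (c 0) (c N))
  hfe_lip : ∀ i, 1 ≤ i → i ≤ N →
    ∀ x ∈ Set.Icc (c (i - 1)) (c i), ∀ y ∈ Set.Icc (c (i - 1)) (c i),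
      |fe i x - fe i y| ≤ lam * |x - y|
  hfe_eq : ∀ i, 1 ≤ i → i ≤ N → ∀ x ∈ Set.Ioo (c (i - 1)) (c i), fe i x = f x
  hfe_left : fe 1 (c 0) = f (c 0)
  hfe_right : fe N (c N) = f (c N)

namespace PCIM

variable (P : PCIM)

/-- The phase space `X = [c 0, c N]`. -/
def X : Set ℝ := Set.Icc (P.c 0) (P.c P.N)

/-- The `i`-th contraction piece (`1 ≤ i ≤ N`). -/
def piece (i : ℕ) : Set ℝ :=
  Set.Ioo (P.c (i - 1)) (P.c i)
    ∪ (if i = 1 then {P.c 0} else (∅ : Set ℝ))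
    ∪ (if i = P.N then {P.c P.N} else (∅ : Set ℝ))

/-- `Δ`, the set of interior boundary points of the pieces. -/
def Δ : Set ℝ := {y | ∃ i, 1 ≤ i ∧ i < P.N ∧ y = P.c i}

/-- `X̃ = ⋂ n, f⁻ⁿ(X \ Δ)`: points whose whole forward orbit stays in `X` and avoids `Δ`. -/
def Xt : Set ℝ := {x | ∀ n : ℕ, P.f^[n] x ∈ P.X \ P.Δ}

/-- Forward orbit of `x`. -/
def orbit (x : ℝ) : Set ℝ := Set.range fun n : ℕ => P.f^[n] x

/-- The ω-limit set of `x`: limits of subsequences of the forward orbit. -/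
def omega (x : ℝ) : Set ℝ :=
  {y | ∃ φ : ℕ → ℕ, StrictMono φ ∧
    Filter.Tendsto (fun n => P.f^[φ n] x) Filter.atTop (nhds y)}

/-- `d_i^- = f_i (c_i)`, the left lateral limit of `f` at `c i`. -/
def dminus (i : ℕ) : ℝ := P.fe i (P.c i)

/-- `d_i^+ = f_{i+1} (c_i)`, the right lateral limit of `f` at `c i`. -/
def dplus (i : ℕ) : ℝ := P.fe (i + 1) (P.c i)

/-- `D⁻ = {d_1^-, …, d_{N-1}^-}`. -/
def Dminus : Set ℝ := {y | ∃ i, 1 ≤ i ∧ i < P.N ∧ y = P.dminus i}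

/-- `D⁺ = {d_1^+, …, d_{N-1}^+}`. -/
def Dplus : Set ℝ := {y | ∃ i, 1 ≤ i ∧ i < P.N ∧ y = P.dplus i}

/-- `D`, the set of all one-sided limits of `f` at endpoints of the pieces. -/
def D : Set ℝ := P.Dminus ∪ P.Dplus ∪ {P.fe 1 (P.c 0), P.fe P.N (P.c P.N)}

/-- `A` is pseudo-invariant: for every `x ∈ A` at least one one-sided limit of `f`
at `x` (i.e. some `fe i x` with `x` in the closure of the `i`-th piece) belongs to `A`. -/
def PseudoInvariant (A : Set ℝ) : Prop :=
  ∀ x ∈ A, ∃ i, 1 ≤ i ∧ i ≤ P.N ∧ x ∈ Set.Icc (P.c (i - 1)) (P.c i) ∧ P.fe i x ∈ A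

/-- `F_i(A) = closure (f (A ∩ X_i))`. -/
def Fmap (i : ℕ) (A : Set ℝ) : Set ℝ := closure (P.f '' (A ∩ P.piece i))

/-- For a word `w = [i_1, …, i_n]`, the set `F_{i_n} ∘ … ∘ F_{i_1} (X)`. -/
def atomOf (w : List ℕ) : Set ℝ := w.foldl (fun S i => P.Fmap i S) P.X

/-- `A` is an atom of generation `n`. -/
def IsAtomGen (n : ℕ) (A : Set ℝ) : Prop :=
  ∃ w : List ℕ, w.length = n ∧ (∀ i ∈ w, 1 ≤ i ∧ i ≤ P.N) ∧
    A = P.atomOf w ∧ A.Nonempty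

/-- `Lam n` is `Λ_{n+1}` of the paper: `Λ_1 = closure (f(X \ Δ))`,
`Λ_{n+1} = closure (f(Λ_n \ Δ))`. -/
def Lam (P : PCIM) : ℕ → Set ℝ
  | 0 => closure (P.f '' (P.X \ P.Δ))
  | n + 1 => closure (P.f '' (P.Lam n \ P.Δ))

/-- The attractor `Λ = ⋂_{n ≥ 1} Λ_n`. -/
def attractor : Set ℝ := ⋂ n : ℕ, P.Lam n

/-- `c i ∈ Δ_lr(x)`: the boundary point `c i` is left-right recurrently visited by the
orbit of `x`. -/
def lrVisited (x : ℝ) (i : ℕ) : Prop :=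
  1 ≤ i ∧ i < P.N ∧
  ∃ l r : ℕ → ℕ, StrictMono l ∧ StrictMono r ∧
    (∀ j, P.f^[l j] x ∈ P.piece i) ∧ (∀ j, P.f^[r j] x ∈ P.piece (i + 1)) ∧
    Filter.Tendsto (fun j => P.f^[l j] x) Filter.atTop (nhds (P.c i)) ∧
    Filter.Tendsto (fun j => P.f^[r j] x) Filter.atTop (nhds (P.c i))

/-- `c i ∈ Δ_lr`: `c i` is left-right recurrently visited by the orbit of some point
of `X̃`. -/
def inΔlr (i : ℕ) : Prop := ∃ x ∈ P.Xt, P.lrVisited x i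

/-- The set `Δ_lr ⊆ Δ`. -/
def ΔlrSet : Set ℝ := {y | ∃ i, P.inΔlr i ∧ y = P.c i}

/-- The relation `∼⁺` on `Δ_lr`: `c_i ∼⁺ c_j` iff `c_i = c_j` or
(`c_i ∈ Δ_lr(d_j^+)` and `c_j ∈ Δ_lr(d_i^+)`). -/
def simP (a b : ℝ) : Prop :=
  a = b ∨ ∃ i j, P.inΔlr i ∧ P.inΔlr j ∧ a = P.c i ∧ b = P.c j ∧
    P.lrVisited (P.dplus j) i ∧ P.lrVisited (P.dplus i) j

/-- The relation `≼⁺` (on representatives): `[c_i] ≼⁺ [c_j]` iff `[c_i] = [c_j]` or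
`c_i ∈ Δ_lr(d_j^+)`. -/
def preP (a b : ℝ) : Prop :=
  P.simP a b ∨ ∃ i j, P.inΔlr i ∧ P.inΔlr j ∧ a = P.c i ∧ b = P.c j ∧
    P.lrVisited (P.dplus j) i

/-- `[c i]` is a minimal class for the partial order `≼⁺`. -/
def MinimalClass (i : ℕ) : Prop :=
  P.inΔlr i ∧ ∀ j, P.inΔlr j → P.preP (P.c j) (P.c i) → P.simP (P.c j) (P.c i)

/-- `f` is injective on each contraction piece. -/
def InjPieces : Prop := ∀ i, 1 ≤ i → i ≤ P.N → Set.InjOn P.f (P.piece i)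

/-- `f` is (strictly) increasing on each contraction piece. -/
def IncrPieces : Prop := ∀ i, 1 ≤ i → i ≤ P.N → StrictMonoOn P.f (P.piece i)

/-- `x` is a periodic point of `f`. -/
def IsPeriodic (x : ℝ) : Prop := ∃ p : ℕ, 1 ≤ p ∧ P.f^[p] x = x

/-- `η` is the itinerary of `x`: `f^[n] x ∈ X_{η n}` for all `n`. -/
def IsItinerary (x : ℝ) (η : ℕ → ℕ) : Prop :=
  ∀ n, 1 ≤ η n ∧ η n ≤ P.N ∧ P.f^[n] x ∈ P.piece (η n)

end PCIM

/-- The word of length `n` of the sequence `η` starting at position `t`. -/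
def wordAt (η : ℕ → ℕ) (t n : ℕ) : List ℕ := (List.range n).map fun m => η (t + m)

/-- The complexity function of the sequence `η`: the number of distinct words of
length `n` occurring in `η`. -/
noncomputable def complexity (η : ℕ → ℕ) (n : ℕ) : ℕ := Set.ncard {w : List ℕ | ∃ t, w = wordAt η t n}

namespace PCIM

variable (P : PCIM)

lemma lam_pos : 0 < P.lam := P.hlam.1
lemma lam_nonneg : 0 ≤ P.lam := P.hlam.1.le
lemma lam_lt_one : P.lam < 1 := P.hlam.2
lemma lam_le_one : P.lam ≤ 1 := P.hlam.2.le

lemma pow_lam_le_one (k : ℕ) : P.lam ^ k ≤ 1 :=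
  pow_le_one₀ P.lam_nonneg P.lam_le_one

lemma pow_lam_pos (k : ℕ) : 0 < P.lam ^ k := pow_pos P.lam_pos k

lemma c_lt_c {i j : ℕ} (hij : i < j) (hj : j ≤ P.N) : P.c i < P.c j :=
  P.hc (le_trans hij.le hj) hj hij

lemma c_le_c {i j : ℕ} (hij : i ≤ j) (hj : j ≤ P.N) : P.c i ≤ P.c j := by
  rcases eq_or_lt_of_le hij with h | h
  · exact le_of_eq (congrArg P.c h)
  · exact (P.c_lt_c h hj).le

lemma le_of_c_le_c {i j : ℕ} (hi : i ≤ P.N) (hj : j ≤ P.N) (h : P.c i ≤ P.c j) : i ≤ j := by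
  by_contra hc
  exact absurd (P.c_lt_c (not_le.1 hc) hi) (not_lt.2 h)

lemma mem_piece {i : ℕ} {x : ℝ} :
    x ∈ P.piece i ↔ x ∈ Set.Ioo (P.c (i-1)) (P.c i) ∨ (i = 1 ∧ x = P.c 0)
      ∨ (i = P.N ∧ x = P.c P.N) := by
  unfold piece
  by_cases h1 : i = 1 <;> by_cases h2 : i = P.N <;> simp [h1, h2] <;> tauto

lemma piece_subset_Icc {i : ℕ} (h1 : 1 ≤ i) (hN : i ≤ P.N) :
    P.piece i ⊆ Set.Icc (P.c (i-1)) (P.c i) := by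
  intro x hx
  rcases P.mem_piece.1 hx with h | ⟨hi, hx0⟩ | ⟨hi, hx0⟩
  · exact ⟨h.1.le, h.2.le⟩
  · subst hi; subst hx0
    exact ⟨le_refl _, P.c_le_c (by omega) hN⟩
  · subst hi; subst hx0
    exact ⟨P.c_le_c (by omega) hN, le_refl _⟩

lemma Icc_subset_X {i : ℕ} (h1 : 1 ≤ i) (hN : i ≤ P.N) :
    Set.Icc (P.c (i-1)) (P.c i) ⊆ P.X := by
  intro x hx
  exact ⟨le_trans (P.c_le_c (Nat.zero_le _) (by omega)) hx.1,
    le_trans hx.2 (P.c_le_c hN le_rfl)⟩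

lemma piece_subset_X {i : ℕ} (h1 : 1 ≤ i) (hN : i ≤ P.N) : P.piece i ⊆ P.X :=
  subset_trans (P.piece_subset_Icc h1 hN) (P.Icc_subset_X h1 hN)

lemma fe_eq_f_on_piece {i : ℕ} (h1 : 1 ≤ i) (hN : i ≤ P.N) {x : ℝ}
    (hx : x ∈ P.piece i) : P.fe i x = P.f x := by
  rcases P.mem_piece.1 hx with h | ⟨hi, hx0⟩ | ⟨hi, hx0⟩
  · exact P.hfe_eq i h1 hN x h
  · subst hi; subst hx0; exact P.hfe_left
  · subst hi; subst hx0; exact P.hfe_right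

lemma piece_eq_of_mem {i j : ℕ} (hi1 : 1 ≤ i) (hiN : i ≤ P.N) (hj1 : 1 ≤ j) (hjN : j ≤ P.N)
    {x : ℝ} (hxi : x ∈ P.piece i) (hxj : x ∈ P.piece j) : i = j := by
  have aux : ∀ i j : ℕ, 1 ≤ i → i ≤ P.N → 1 ≤ j → j ≤ P.N →
      x ∈ P.piece i → x ∈ P.piece j → i < j → False := by
    intro i j hi1 hiN hj1 hjN hxi hxj hij
    have h1 : x ≤ P.c i := (P.piece_subset_Icc hi1 hiN hxi).2
    have h2 : P.c (j-1) ≤ x := (P.piece_subset_Icc hj1 hjN hxj).1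
    have h3 : P.c i ≤ P.c (j-1) := P.c_le_c (by omega) (by omega)
    have hxc : x = P.c i := le_antisymm h1 (le_trans h3 h2)
    rcases P.mem_piece.1 hxi with h | ⟨hieq, hx0⟩ | ⟨hieq, hx0⟩
    · exact absurd hxc (ne_of_lt h.2)
    · subst hieq
      rw [hx0] at hxc
      exact absurd hxc (ne_of_lt (P.c_lt_c Nat.zero_lt_one (by omega)))
    · subst hieq
      omega
  rcases lt_trichotomy i j with h | h | h
  · exact absurd (aux i j hi1 hiN hj1 hjN hxi hxj h) not_false
  · exact h
  · exact absurd (aux j i hj1 hjN hi1 hiN hxj hxi h) not_false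

lemma not_mem_Δ_of_mem_piece {i : ℕ} (hi1 : 1 ≤ i) (hiN : i ≤ P.N) {x : ℝ}
    (hx : x ∈ P.piece i) : x ∉ P.Δ := by
  rintro ⟨k, hk1, hkN, rfl⟩
  rcases P.mem_piece.1 hx with h | ⟨hieq, hx0⟩ | ⟨hieq, hx0⟩
  · have hl : i - 1 < k := by
      by_contra hc
      exact absurd (P.c_le_c (not_lt.1 hc) (by omega)) (not_le.2 h.1)
    have hr : k < i := by
      by_contra hc
      exact absurd (P.c_le_c (not_lt.1 hc) (by omega)) (not_le.2 h.2)
    omega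
  · exact absurd hx0 (ne_of_gt (P.c_lt_c (by omega) (by omega)))
  · exact absurd hx0 (ne_of_lt (P.c_lt_c hkN le_rfl))

lemma mem_piece_of_Icc {i : ℕ} (hi1 : 1 ≤ i) (hiN : i ≤ P.N) {x : ℝ}
    (hx : x ∈ Set.Icc (P.c (i-1)) (P.c i)) (hΔ : x ∉ P.Δ) : x ∈ P.piece i := by
  rcases eq_or_lt_of_le hx.1 with h1 | h1
  · -- x = c (i-1)
    rcases Nat.eq_or_lt_of_le hi1 with hi | hi
    · exact P.mem_piece.2 (Or.inr (Or.inl ⟨hi.symm, by rw [← h1, ← hi]⟩))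
    · exact absurd ⟨i-1, by omega, by omega, h1.symm⟩ hΔ
  rcases eq_or_lt_of_le hx.2 with h2 | h2
  · rcases Nat.eq_or_lt_of_le hiN with hi | hi
    · exact P.mem_piece.2 (Or.inr (Or.inr ⟨hi, by rw [h2, hi]⟩))
    · exact absurd ⟨i, hi1, hi, h2⟩ hΔ
  · exact P.mem_piece.2 (Or.inl ⟨h1, h2⟩)

lemma exists_piece {z : ℝ} (hz : z ∈ P.X) (hΔ : z ∉ P.Δ) :
    ∃ i, 1 ≤ i ∧ i ≤ P.N ∧ z ∈ P.piece i := by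
  have hNpos : 0 < P.N := by have := P.hN; omega
  have hzIcc : z ∈ Set.Icc (P.c 0) (P.c P.N) := hz
  have hSne : (Finset.filter (fun m => z ≤ P.c m) (Finset.range (P.N+1))).Nonempty := by
    exact ⟨P.N, by simpa [Finset.mem_filter, Finset.mem_range] using hzIcc.2⟩
  set S := Finset.filter (fun m => z ≤ P.c m) (Finset.range (P.N+1)) with hS
  set i := S.min' hSne with hi
  have hiS : i ∈ S := Finset.min'_mem S hSne
  have hiN : i ≤ P.N := by
    have := (Finset.mem_filter.1 hiS).1; simp [Finset.mem_range] at this; omega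
  have hzi : z ≤ P.c i := (Finset.mem_filter.1 hiS).2
  rcases Nat.eq_zero_or_pos i with hi0 | hipos
  · -- z = c 0, use piece 1
    have : z = P.c 0 := le_antisymm (by rw [← hi0]; exact hzi) hzIcc.1
    exact ⟨1, le_rfl, by omega, P.mem_piece.2 (Or.inr (Or.inl ⟨rfl, this⟩))⟩
  · refine ⟨i, hipos, hiN, P.mem_piece_of_Icc hipos hiN ⟨?_, hzi⟩ hΔ⟩
    by_contra hc
    have : i - 1 ∈ S := by
      simp only [hS, Finset.mem_filter, Finset.mem_range]
      exact ⟨by omega, not_lt.1 (fun h => hc (le_of_lt h))⟩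
    have := Finset.min'_le S _ this
    omega

lemma iter_mem_X {y : ℝ} (hy : y ∈ P.X) (n : ℕ) : P.f^[n] y ∈ P.X := by
  induction n with
  | zero => exact hy
  | succ n ih => rw [Function.iterate_succ_apply']; exact P.hmap ih

lemma piece_rel_open {i : ℕ} (h1 : 1 ≤ i) (hN : i ≤ P.N) {x : ℝ} (hx : x ∈ P.piece i) :
    ∃ r > 0, ∀ w ∈ P.X, |w - x| ≤ r → w ∈ P.piece i := by
  rcases P.mem_piece.1 hx with h | ⟨hi, hx0⟩ | ⟨hi, hx0⟩
  · refine ⟨min (x - P.c (i-1)) (P.c i - x) / 2, by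
      have := lt_min (show (0:ℝ) < x - P.c (i-1) by linarith [h.1])
        (show (0:ℝ) < P.c i - x by linarith [h.2])
      linarith, ?_⟩
    intro w hw hwr
    have h1' := abs_le.1 hwr
    have hm1 : min (x - P.c (i-1)) (P.c i - x) ≤ x - P.c (i-1) := min_le_left _ _
    have hm2 : min (x - P.c (i-1)) (P.c i - x) ≤ P.c i - x := min_le_right _ _
    have hmpos : 0 < min (x - P.c (i-1)) (P.c i - x) := lt_min (by linarith [h.1]) (by linarith [h.2])
    exact P.mem_piece.2 (Or.inl ⟨by linarith, by linarith⟩)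
  · subst hi; subst hx0
    have hc01 : P.c 0 < P.c 1 := P.c_lt_c Nat.zero_lt_one (by omega)
    refine ⟨(P.c 1 - P.c 0) / 2, by linarith, ?_⟩
    intro w hw hwr
    have h1' := abs_le.1 hwr
    rcases eq_or_lt_of_le hw.1 with he | hlt
    · exact P.mem_piece.2 (Or.inr (Or.inl ⟨rfl, he.symm⟩))
    · exact P.mem_piece.2 (Or.inl ⟨by simpa using hlt, by linarith⟩)
  · subst hi; subst hx0
    have hcN : P.c (P.N - 1) < P.c P.N := P.c_lt_c (by omega) le_rfl
    refine ⟨(P.c P.N - P.c (P.N - 1)) / 2, by linarith, ?_⟩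
    intro w hw hwr
    have h1' := abs_le.1 hwr
    rcases eq_or_lt_of_le hw.2 with he | hlt
    · exact P.mem_piece.2 (Or.inr (Or.inr ⟨rfl, he⟩))
    · exact P.mem_piece.2 (Or.inl ⟨by linarith, hlt⟩)

lemma step_lip {i : ℕ} (h1 : 1 ≤ i) (hN : i ≤ P.N) {u v : ℝ}
    (hu : u ∈ P.piece i) (hv : v ∈ Set.Icc (P.c (i-1)) (P.c i)) :
    |P.f u - P.fe i v| ≤ P.lam * |u - v| := by
  rw [← P.fe_eq_f_on_piece h1 hN hu]
  exact P.hfe_lip i h1 hN u (P.piece_subset_Icc h1 hN hu) v hv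

end PCIM
namespace PCIM

/-- Bundled context: a periodic point in `Xt` together with its itinerary. -/
structure Ctx (P : PCIM) where
  x0 : ℝ
  p : ℕ
  hp : 1 ≤ p
  hper : P.f^[p] x0 = x0
  hxt : x0 ∈ P.Xt
  η : ℕ → ℕ
  hη1 : ∀ n, 1 ≤ η n
  hη2 : ∀ n, η n ≤ P.N
  hη3 : ∀ n, P.f^[n] x0 ∈ P.piece (η n)

variable (P : PCIM) (C : Ctx P)

/-- The periodic orbit. -/
def xseq (n : ℕ) : ℝ := P.f^[n] C.x0

lemma xseq_mem_piece (n : ℕ) : P.xseq C n ∈ P.piece (C.η n) := C.hη3 n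

lemma xseq_mem_X (n : ℕ) : P.xseq C n ∈ P.X :=
  P.piece_subset_X (C.hη1 n) (C.hη2 n) (P.xseq_mem_piece C n)

lemma xseq_succ (n : ℕ) : P.xseq C (n+1) = P.f (P.xseq C n) := by
  simp [xseq, Function.iterate_succ_apply']

lemma xseq_succ' (n : ℕ) : P.xseq C (n+1) = P.fe (C.η n) (P.xseq C n) := by
  rw [P.xseq_succ C n, P.fe_eq_f_on_piece (C.hη1 n) (C.hη2 n) (P.xseq_mem_piece C n)]

lemma xseq_add_mul (a t : ℕ) : P.xseq C (a + t * C.p) = P.xseq C a := by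
  induction t with
  | zero => simp [xseq]
  | succ t ih =>
    have h : a + (t+1) * C.p = (a + t * C.p) + C.p := by ring
    rw [h]
    show P.f^[(a + t * C.p) + C.p] C.x0 = _
    rw [Function.iterate_add_apply, C.hper]
    exact ih

lemma xseq_mod (n : ℕ) : P.xseq C n = P.xseq C (n % C.p) := by
  conv_lhs => rw [← Nat.mod_add_div' n C.p]
  exact P.xseq_add_mul C (n % C.p) (n / C.p)

lemma η_mod (n : ℕ) : C.η n = C.η (n % C.p) := by
  apply P.piece_eq_of_mem (C.hη1 n) (C.hη2 n) (C.hη1 _) (C.hη2 _)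
    (x := P.xseq C n) (P.xseq_mem_piece C n)
  rw [P.xseq_mod C n]
  exact P.xseq_mem_piece C (n % C.p)

lemma exists_eps : ∃ ε > 0, ∀ z ∈ P.X, ∀ n, |z - P.xseq C n| < ε → z ∈ P.piece (C.η n) := by
  have H : ∀ n : ℕ, ∃ r > 0, ∀ w ∈ P.X, |w - P.xseq C n| ≤ r → w ∈ P.piece (C.η n) :=
    fun n => P.piece_rel_open (C.hη1 n) (C.hη2 n) (P.xseq_mem_piece C n)
  choose r hr hr' using H
  have hne : (Finset.range C.p).Nonempty := ⟨0, Finset.mem_range.2 C.hp⟩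
  refine ⟨(Finset.range C.p).inf' hne r, ?_, ?_⟩
  · exact (Finset.lt_inf'_iff hne).2 fun m _ => hr m
  · intro z hz n hzn
    have h1 : (Finset.range C.p).inf' hne r ≤ r (n % C.p) :=
      Finset.inf'_le r (Finset.mem_range.2 (Nat.mod_lt n C.hp))
    have h2 : P.xseq C n = P.xseq C (n % C.p) := P.xseq_mod C n
    rw [P.η_mod C n]
    exact hr' (n % C.p) z hz (by rw [← h2]; linarith)

lemma capture {ε : ℝ} (hε : ∀ z ∈ P.X, ∀ n, |z - P.xseq C n| < ε → z ∈ P.piece (C.η n))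
    {z : ℝ} (hz : z ∈ P.X) {m : ℕ} (hzm : |z - P.xseq C m| < ε) (k : ℕ) :
    |P.f^[k] z - P.xseq C (m + k)| ≤ P.lam ^ k * |z - P.xseq C m|
      ∧ P.f^[k] z ∈ P.piece (C.η (m + k)) := by
  induction k with
  | zero =>
    refine ⟨by simp, ?_⟩
    simpa using hε z hz m hzm
  | succ k ih =>
    obtain ⟨ihb, ihm⟩ := ih
    have hbound : |P.f^[k+1] z - P.xseq C (m + (k+1))| ≤ P.lam ^ (k+1) * |z - P.xseq C m| := by
      have hsl := P.step_lip (C.hη1 (m+k)) (C.hη2 (m+k)) ihm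
        (P.piece_subset_Icc (C.hη1 (m+k)) (C.hη2 (m+k)) (P.xseq_mem_piece C (m+k)))
      rw [Function.iterate_succ_apply', show m + (k+1) = (m+k)+1 by ring, P.xseq_succ' C (m+k)]
      calc |P.f (P.f^[k] z) - P.fe (C.η (m+k)) (P.xseq C (m+k))|
          ≤ P.lam * |P.f^[k] z - P.xseq C (m+k)| := hsl
        _ ≤ P.lam * (P.lam ^ k * |z - P.xseq C m|) := by
            have := P.lam_nonneg
            nlinarith [abs_nonneg (P.f^[k] z - P.xseq C (m+k))]
        _ = P.lam ^ (k+1) * |z - P.xseq C m| := by ring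
    refine ⟨hbound, ?_⟩
    have hlt : |P.f^[k+1] z - P.xseq C (m+(k+1))| < ε := by
      have hd1 : P.lam ^ (k+1) * |z - P.xseq C m| ≤ |z - P.xseq C m| := by
        nlinarith [P.pow_lam_le_one (k+1), abs_nonneg (z - P.xseq C m), P.pow_lam_pos (k+1)]
      exact lt_of_le_of_lt (le_trans hbound hd1) hzm
    exact hε _ (P.iter_mem_X hz (k+1)) _ hlt

/-- The set of points sharing the full itinerary of the periodic point. -/
def Bset : Set ℝ := {y | ∀ n, P.f^[n] y ∈ P.piece (C.η n)}

lemma x0_mem_Bset : C.x0 ∈ P.Bset C := fun n => C.hη3 n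

lemma Bset_subset_X : P.Bset C ⊆ P.X := by
  intro y hy
  have h := hy 0
  simp only [Function.iterate_zero_apply] at h
  exact P.piece_subset_X (C.hη1 0) (C.hη2 0) h

lemma bset_contract {y y' : ℝ} (hy : y ∈ P.Bset C) (hy' : y' ∈ P.Bset C) (n : ℕ) :
    |P.f^[n] y - P.f^[n] y'| ≤ P.lam ^ n * |y - y'| := by
  induction n with
  | zero => simp
  | succ n ih =>
    rw [Function.iterate_succ_apply', Function.iterate_succ_apply']
    have h1 := hy n; have h2 := hy' n
    have hsl := P.step_lip (C.hη1 n) (C.hη2 n) h1 (P.piece_subset_Icc (C.hη1 n) (C.hη2 n) h2)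
    rw [P.fe_eq_f_on_piece (C.hη1 n) (C.hη2 n) h2] at hsl
    calc |P.f (P.f^[n] y) - P.f (P.f^[n] y')| ≤ P.lam * |P.f^[n] y - P.f^[n] y'| := hsl
      _ ≤ P.lam * (P.lam ^ n * |y - y'|) := by
          have := P.lam_nonneg
          nlinarith [abs_nonneg (P.f^[n] y - P.f^[n] y')]
      _ = P.lam ^ (n+1) * |y - y'| := by ring

lemma omega_eq {ε : ℝ} (hεpos : 0 < ε)
    (hε : ∀ z ∈ P.X, ∀ n, |z - P.xseq C n| < ε → z ∈ P.piece (C.η n))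
    {d : ℝ} (hd : d ∈ P.X) {k m : ℕ} (hcap : |P.f^[k] d - P.xseq C m| < ε) :
    P.orbit C.x0 = P.omega d := by
  set q := P.f^[k] d with hq
  have hqX : q ∈ P.X := P.iter_mem_X hd k
  have hcapt : ∀ t, |P.f^[t] q - P.xseq C (m + t)| ≤ P.lam ^ t * |q - P.xseq C m| :=
    fun t => (P.capture C hε hqX hcap t).1
  have hiter : ∀ t, P.f^[t + k] d = P.f^[t] q := fun t => Function.iterate_add_apply _ _ _ _
  have hlam0 : Filter.Tendsto (fun t : ℕ => P.lam ^ t) Filter.atTop (nhds 0) :=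
    tendsto_pow_atTop_nhds_zero_of_lt_one P.lam_nonneg P.lam_lt_one
  ext w
  constructor
  · rintro ⟨j, rfl⟩
    show ∃ φ : ℕ → ℕ, StrictMono φ ∧
      Filter.Tendsto (fun n => P.f^[φ n] d) Filter.atTop (nhds (P.xseq C j))
    set r := j + m * C.p - m with hr
    have hple : m ≤ m * C.p := Nat.le_mul_of_pos_right m C.hp
    have hmr : m + r = j + m * C.p := by omega
    refine ⟨fun n => k + (r + n * C.p), ?_, ?_⟩
    · apply strictMono_nat_of_lt_succ
      intro n
      have h : n * C.p < (n + 1) * C.p := by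
        have := C.hp
        calc n * C.p < n * C.p + C.p := by omega
          _ = (n+1) * C.p := by ring
      omega
    · have hteq : ∀ n : ℕ, P.f^[k + (r + n * C.p)] d = P.f^[r + n * C.p] q := by
        intro n
        rw [show k + (r + n * C.p) = (r + n * C.p) + k by ring]
        exact hiter _
      have hxeq : ∀ n : ℕ, P.xseq C (m + (r + n * C.p)) = P.xseq C j := by
        intro n
        rw [show m + (r + n * C.p) = j + (m + n) * C.p by rw [← add_assoc, hmr]; ring]
        exact P.xseq_add_mul C j (m+n)
      have hb : ∀ n : ℕ, |P.f^[k + (r + n*C.p)] d - P.xseq C j|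
          ≤ P.lam ^ (r + n * C.p) * |q - P.xseq C m| := by
        intro n
        rw [hteq n, ← hxeq n]
        exact hcapt _
      have h1 : Filter.Tendsto (fun n : ℕ => r + n * C.p) Filter.atTop Filter.atTop := by
        apply tendsto_atTop_mono (f := fun n : ℕ => n)
        · intro n
          have := Nat.le_mul_of_pos_right n C.hp
          omega
        · exact tendsto_id
      have htend : Filter.Tendsto (fun n : ℕ => P.lam ^ (r + n * C.p) * |q - P.xseq C m|)
          Filter.atTop (nhds 0) := by
        have := (hlam0.mul_const |q - P.xseq C m|).comp h1
        rw [zero_mul] at this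
        exact this
      rw [tendsto_iff_dist_tendsto_zero]
      apply squeeze_zero (fun n => dist_nonneg)
        (fun n => by rw [Real.dist_eq]; exact hb n) htend
  · rintro ⟨φ, hφ, hlim⟩
    have hne : (Finset.range C.p).Nonempty := ⟨0, Finset.mem_range.2 C.hp⟩
    set M := (Finset.range C.p).inf' hne (fun s => |w - P.xseq C s|) with hM
    have hMle : ∀ t : ℕ, M ≤ |w - P.xseq C t| := by
      intro t
      have h := Finset.inf'_le (fun s => |w - P.xseq C s|)
        (Finset.mem_range.2 (Nat.mod_lt t C.hp))
      rw [P.xseq_mod C t]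
      exact h
    have hkey : ∀ n : ℕ, k ≤ n →
        M ≤ |w - P.f^[φ n] d| + P.lam ^ (φ n - k) * |q - P.xseq C m| := by
      intro n hn
      have hφk : k ≤ φ n := le_trans hn hφ.le_apply
      have heq : P.f^[φ n] d = P.f^[φ n - k] q := by
        rw [← hiter (φ n - k), Nat.sub_add_cancel hφk]
      have h1 := hcapt (φ n - k)
      have h2 := abs_sub_le w (P.f^[φ n] d) (P.xseq C (m + (φ n - k)))
      have h3 := hMle (m + (φ n - k))
      rw [heq] at h2 ⊢
      linarith
    have htendR : Filter.Tendsto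
        (fun n => |w - P.f^[φ n] d| + P.lam ^ (φ n - k) * |q - P.xseq C m|)
        Filter.atTop (nhds 0) := by
      have h1 : Filter.Tendsto (fun n => |w - P.f^[φ n] d|) Filter.atTop (nhds 0) := by
        simpa [Real.dist_eq, abs_sub_comm] using tendsto_iff_dist_tendsto_zero.1 hlim
      have h2 : Filter.Tendsto (fun n => P.lam ^ (φ n - k) * |q - P.xseq C m|)
          Filter.atTop (nhds 0) := by
        have hsub : Filter.Tendsto (fun n : ℕ => φ n - k) Filter.atTop Filter.atTop :=
          tendsto_atTop_mono (fun n => Nat.sub_le_sub_right hφ.le_apply k)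
            (tendsto_sub_atTop_nat k)
        have := (hlam0.mul_const |q - P.xseq C m|).comp hsub
        rw [zero_mul] at this
        exact this
      simpa using h1.add h2
    have hM0 : M ≤ 0 := ge_of_tendsto htendR (Filter.eventually_atTop.2 ⟨k, hkey⟩)
    obtain ⟨s, hs, hsM⟩ := Finset.exists_mem_eq_inf' hne (fun s => |w - P.xseq C s|)
    rw [hM, hsM] at hM0
    have : w = P.xseq C s := by
      have := abs_nonneg (w - P.xseq C s)
      have h0 : |w - P.xseq C s| = 0 := le_antisymm hM0 this
      have := abs_eq_zero.1 h0
      linarith [sub_eq_zero.1 this]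
    exact ⟨s, this.symm⟩

lemma mem_Icc_of_approx {A B v : ℝ}
    (h : ∀ δ : ℝ, 0 < δ → ∃ u, u ∈ Set.Icc A B ∧ |u - v| ≤ δ) : v ∈ Set.Icc A B := by
  constructor
  · refine le_of_forall_pos_le_add fun δ hδ => ?_
    obtain ⟨u, hu, hd⟩ := h δ hδ
    have := abs_le.1 hd
    linarith [hu.1]
  · refine le_of_forall_pos_le_add fun δ hδ => ?_
    obtain ⟨u, hu, hd⟩ := h δ hδ
    have := abs_le.1 hd
    linarith [hu.2]

/-- The sequence of lateral iterates at a boundary point of the itinerary set. -/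
def zseq (w : ℝ) : ℕ → ℝ
  | 0 => w
  | n+1 => P.fe (C.η n) (zseq w n)

@[simp] lemma zseq_zero (w : ℝ) : P.zseq C w 0 = w := rfl

lemma zseq_succ (w : ℝ) (n : ℕ) : P.zseq C w (n+1) = P.fe (C.η n) (P.zseq C w n) := rfl

lemma zseq_props {w : ℝ} (happ : ∀ δ : ℝ, 0 < δ → ∃ y ∈ P.Bset C, |w - y| ≤ δ) (n : ℕ) :
    P.zseq C w n ∈ Set.Icc (P.c (C.η n - 1)) (P.c (C.η n)) ∧
      ∀ y ∈ P.Bset C, |P.f^[n] y - P.zseq C w n| ≤ P.lam ^ n * |w - y| := by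
  induction n with
  | zero =>
    have hb : ∀ y ∈ P.Bset C, |P.f^[0] y - P.zseq C w 0| ≤ P.lam ^ 0 * |w - y| := by
      intro y hy
      simp [abs_sub_comm]
    refine ⟨?_, hb⟩
    apply mem_Icc_of_approx
    intro δ hδ
    obtain ⟨y, hy, hd⟩ := happ δ hδ
    have h0 := hy 0
    simp only [Function.iterate_zero_apply] at h0
    refine ⟨y, P.piece_subset_Icc (C.hη1 0) (C.hη2 0) h0, ?_⟩
    simpa [abs_sub_comm] using hd
  | succ n ih =>
    obtain ⟨hzI, hb⟩ := ih
    have hb' : ∀ y ∈ P.Bset C, |P.f^[n+1] y - P.zseq C w (n+1)| ≤ P.lam ^ (n+1) * |w - y| := by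
      intro y hy
      have h1 : P.f^[n] y ∈ P.piece (C.η n) := hy n
      have h2 := P.step_lip (C.hη1 n) (C.hη2 n) h1 hzI
      rw [Function.iterate_succ_apply', P.zseq_succ C w n]
      calc |P.f (P.f^[n] y) - P.fe (C.η n) (P.zseq C w n)|
          ≤ P.lam * |P.f^[n] y - P.zseq C w n| := h2
        _ ≤ P.lam * (P.lam ^ n * |w - y|) := by
            have := P.lam_nonneg
            nlinarith [hb y hy, abs_nonneg (P.f^[n] y - P.zseq C w n)]
        _ = P.lam ^ (n+1) * |w - y| := by ring
    refine ⟨?_, hb'⟩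
    apply mem_Icc_of_approx
    intro δ hδ
    obtain ⟨y, hy, hd⟩ := happ δ hδ
    refine ⟨P.f^[n+1] y, P.piece_subset_Icc (C.hη1 (n+1)) (C.hη2 (n+1)) (hy (n+1)), ?_⟩
    have h3 := hb' y hy
    have hle : P.lam ^ (n+1) * |w - y| ≤ δ := by
      nlinarith [P.pow_lam_le_one (n+1), abs_nonneg (w - y), P.pow_lam_pos (n+1)]
    linarith

lemma goal_of_z_mem_Δ (hD : P.D ⊆ P.Xt) {ε : ℝ} (hεpos : 0 < ε)
    (hε : ∀ z ∈ P.X, ∀ n, |z - P.xseq C n| < ε → z ∈ P.piece (C.η n))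
    {w : ℝ} (happ : ∀ δ : ℝ, 0 < δ → ∃ y ∈ P.Bset C, |w - y| ≤ δ)
    {n : ℕ} (hzn : P.zseq C w n ∈ P.Δ) :
    ∃ d ∈ P.Dminus ∪ P.Dplus, P.orbit C.x0 = P.omega d := by
  obtain ⟨i, hi1, hiN, hzi⟩ := hzn
  have hIcc := (P.zseq_props C happ n).1
  rw [hzi] at hIcc
  have hl : C.η n - 1 ≤ i := P.le_of_c_le_c (by have := C.hη2 n; omega) (by omega) hIcc.1
  have hr : i ≤ C.η n := P.le_of_c_le_c (by omega) (C.hη2 n) hIcc.2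
  have hdm : P.zseq C w (n+1) ∈ P.Dminus ∪ P.Dplus := by
    rcases eq_or_lt_of_le hr with he | hlt
    · left
      refine ⟨i, hi1, hiN, ?_⟩
      rw [P.zseq_succ C w n, hzi, ← he]
      rfl
    · right
      have hηeq : C.η n = i + 1 := by have := C.hη1 n; omega
      refine ⟨i, hi1, hiN, ?_⟩
      rw [P.zseq_succ C w n, hzi, hηeq]
      rfl
  set d := P.zseq C w (n+1) with hd
  have hdXt : d ∈ P.Xt := hD (Or.inl hdm)
  have hiter : ∀ k, P.f^[k] d = P.zseq C w (n+1+k) := by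
    intro k
    induction k with
    | zero => simp [hd]
    | succ k ih =>
      have hu : P.zseq C w (n+1+k) ∈ P.X \ P.Δ := by rw [← ih]; exact hdXt k
      have huP : P.zseq C w (n+1+k) ∈ P.piece (C.η (n+1+k)) :=
        P.mem_piece_of_Icc (C.hη1 _) (C.hη2 _) (P.zseq_props C happ (n+1+k)).1 hu.2
      rw [Function.iterate_succ_apply', ih, show n+1+(k+1) = (n+1+k)+1 by ring,
        P.zseq_succ C w (n+1+k), P.fe_eq_f_on_piece (C.hη1 _) (C.hη2 _) huP]
  have hx0B := P.x0_mem_Bset C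
  have hshadow : ∀ t, |P.zseq C w t - P.xseq C t| ≤ P.lam ^ t * |w - C.x0| := by
    intro t
    have h := (P.zseq_props C happ t).2 C.x0 hx0B
    rw [abs_sub_comm]
    exact h
  obtain ⟨t, ht⟩ : ∃ t, P.lam ^ t * (|w - C.x0| + 1) < ε := by
    have hApos : (0:ℝ) < |w - C.x0| + 1 := by positivity
    obtain ⟨t, ht⟩ := exists_pow_lt_of_lt_one (div_pos hεpos hApos) P.lam_lt_one
    exact ⟨t, (lt_div_iff₀ hApos).1 ht⟩
  have hcap : |P.f^[t] d - P.xseq C (n+1+t)| < ε := by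
    rw [hiter t]
    calc |P.zseq C w (n+1+t) - P.xseq C (n+1+t)|
        ≤ P.lam ^ (n+1+t) * |w - C.x0| := hshadow _
      _ ≤ P.lam ^ t * |w - C.x0| := by
          have hpow : P.lam ^ (n+1+t) ≤ P.lam ^ t :=
            pow_le_pow_of_le_one P.lam_nonneg P.lam_le_one (by omega)
          nlinarith [abs_nonneg (w - C.x0)]
      _ < ε := by nlinarith [P.pow_lam_pos t]
  have hdX : d ∈ P.X := by
    have := (hdXt 0).1
    simpa using this
  exact ⟨d, hdm, P.omega_eq C hεpos hε hdX hcap⟩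

lemma mem_Bset_of_z_not_Δ {w : ℝ}
    (happ : ∀ δ : ℝ, 0 < δ → ∃ y ∈ P.Bset C, |w - y| ≤ δ)
    (hz : ∀ n, P.zseq C w n ∉ P.Δ) : w ∈ P.Bset C := by
  have key : ∀ n, P.f^[n] w = P.zseq C w n ∧ P.zseq C w n ∈ P.piece (C.η n) := by
    intro n
    induction n with
    | zero =>
      exact ⟨rfl, P.mem_piece_of_Icc (C.hη1 0) (C.hη2 0) (P.zseq_props C happ 0).1 (hz 0)⟩
    | succ n ih =>
      have h1 : P.f^[n+1] w = P.zseq C w (n+1) := by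
        rw [Function.iterate_succ_apply', ih.1, P.zseq_succ C w n,
          P.fe_eq_f_on_piece (C.hη1 n) (C.hη2 n) ih.2]
      exact ⟨h1, P.mem_piece_of_Icc (C.hη1 _) (C.hη2 _) (P.zseq_props C happ (n+1)).1 (hz (n+1))⟩
  intro n
  rw [(key n).1]
  exact (key n).2

lemma bset_open {ε : ℝ} (hεpos : 0 < ε)
    (hε : ∀ z ∈ P.X, ∀ n, |z - P.xseq C n| < ε → z ∈ P.piece (C.η n))
    {w : ℝ} (hw : w ∈ P.Bset C) :
    ∃ δ > 0, ∀ y ∈ P.X, |y - w| ≤ δ → y ∈ P.Bset C := by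
  have F : ∀ n : ℕ, ∀ ρ : ℝ, 0 < ρ → ∃ δ > 0, ∀ y ∈ P.X, |y - w| ≤ δ →
      (∀ m < n, P.f^[m] y ∈ P.piece (C.η m)) ∧ |P.f^[n] y - P.f^[n] w| ≤ ρ := by
    intro n
    induction n with
    | zero =>
      intro ρ hρ
      exact ⟨ρ, hρ, fun y hy hyw =>
        ⟨fun m hm => absurd hm (Nat.not_lt_zero m), by simpa using hyw⟩⟩
    | succ n ih =>
      intro ρ hρ
      obtain ⟨r, hrpos, hr⟩ := P.piece_rel_open (C.hη1 n) (C.hη2 n) (hw n)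
      obtain ⟨δ, hδpos, hδ⟩ := ih (min r ρ) (lt_min hrpos hρ)
      refine ⟨δ, hδpos, fun y hy hyw => ?_⟩
      obtain ⟨hpieces, hbound⟩ := hδ y hy hyw
      have hynX : P.f^[n] y ∈ P.X := P.iter_mem_X hy n
      have hynP : P.f^[n] y ∈ P.piece (C.η n) :=
        hr _ hynX (le_trans hbound (min_le_left _ _))
      refine ⟨fun m hm => ?_, ?_⟩
      · rcases Nat.lt_succ_iff_lt_or_eq.1 hm with h | h
        · exact hpieces m h
        · subst h; exact hynP
      · rw [Function.iterate_succ_apply', Function.iterate_succ_apply']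
        have h2 := P.step_lip (C.hη1 n) (C.hη2 n) hynP
          (P.piece_subset_Icc (C.hη1 n) (C.hη2 n) (hw n))
        rw [P.fe_eq_f_on_piece (C.hη1 n) (C.hη2 n) (hw n)] at h2
        have h3 : |P.f^[n] y - P.f^[n] w| ≤ ρ := le_trans hbound (min_le_right _ _)
        have h4 : (0:ℝ) ≤ |P.f^[n] y - P.f^[n] w| := abs_nonneg _
        calc |P.f (P.f^[n] y) - P.f (P.f^[n] w)|
            ≤ P.lam * |P.f^[n] y - P.f^[n] w| := h2
          _ ≤ ρ := by nlinarith [P.lam_nonneg, P.lam_le_one]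
  obtain ⟨n₀, hn₀⟩ : ∃ t, P.lam ^ t * (|w - C.x0| + 1) < ε / 2 := by
    have hApos : (0:ℝ) < |w - C.x0| + 1 := by positivity
    obtain ⟨t, ht⟩ := exists_pow_lt_of_lt_one (div_pos (half_pos hεpos) hApos) P.lam_lt_one
    exact ⟨t, (lt_div_iff₀ hApos).1 ht⟩
  obtain ⟨δ, hδpos, hδ⟩ := F n₀ (ε/4) (by positivity)
  refine ⟨δ, hδpos, fun y hy hyw => ?_⟩
  obtain ⟨hpieces, hbound⟩ := hδ y hy hyw
  have hwn : |P.f^[n₀] w - P.xseq C n₀| ≤ P.lam ^ n₀ * |w - C.x0| :=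
    P.bset_contract C hw (P.x0_mem_Bset C) n₀
  have hcap0 : |P.f^[n₀] y - P.xseq C n₀| < ε := by
    have h1 : P.lam ^ n₀ * |w - C.x0| < ε/2 := by nlinarith [P.pow_lam_pos n₀]
    calc |P.f^[n₀] y - P.xseq C n₀|
        ≤ |P.f^[n₀] y - P.f^[n₀] w| + |P.f^[n₀] w - P.xseq C n₀| := abs_sub_le _ _ _
      _ < ε := by linarith
  intro n
  rcases lt_or_ge n n₀ with h | h
  · exact hpieces n h
  · have h2 := (P.capture C hε (P.iter_mem_X hy n₀) hcap0 (n - n₀)).2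
    rw [← Function.iterate_add_apply] at h2
    rw [show n - n₀ + n₀ = n by omega, show n₀ + (n - n₀) = n by omega] at h2
    exact h2

end PCIM
/-- If `f` is injective on each piece, `D ⊆ X̃`, and `x₀ ∈ X̃` is periodic, then
`O(x₀) = ω(d)` for some `d ∈ D⁻ ∪ D⁺`. -/
theorem stmt6 (P : PCIM) (hinj : P.InjPieces) (hD : P.D ⊆ P.Xt)
    (x₀ : ℝ) (hx₀ : x₀ ∈ P.Xt) (hper : P.IsPeriodic x₀) :
    ∃ d ∈ P.Dminus ∪ P.Dplus, P.orbit x₀ = P.omega d := by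
  obtain ⟨p, hp, hperiod⟩ := hper
  have hηex : ∀ n, ∃ i, 1 ≤ i ∧ i ≤ P.N ∧ P.f^[n] x₀ ∈ P.piece i :=
    fun n => P.exists_piece (hx₀ n).1 (hx₀ n).2
  choose η hη1 hη2 hη3 using hηex
  set C : PCIM.Ctx P := ⟨x₀, p, hp, hperiod, hx₀, η, hη1, hη2, hη3⟩ with hC
  obtain ⟨ε, hεpos, hε⟩ := P.exists_eps C
  have hx0X : x₀ ∈ P.X := by simpa using (hx₀ 0).1
  have hx0B : x₀ ∈ P.Bset C := P.x0_mem_Bset C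
  -- right side
  set B' : Set ℝ := {y | x₀ ≤ y ∧ y ≤ P.c P.N ∧ Set.Icc x₀ y ⊆ P.Bset C} with hB'
  have hx0B' : x₀ ∈ B' := ⟨le_rfl, hx0X.2, by
    rw [Set.Icc_self]
    intro z hz
    rw [Set.mem_singleton_iff.1 hz]
    exact hx0B⟩
  have hB'ne : B'.Nonempty := ⟨x₀, hx0B'⟩
  have hB'bdd : BddAbove B' := ⟨P.c P.N, fun y hy => hy.2.1⟩
  set b := sSup B' with hb
  have hx0b : x₀ ≤ b := le_csSup hB'bdd hx0B'
  have hbN : b ≤ P.c P.N := csSup_le hB'ne (fun y hy => hy.2.1)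
  have happR : ∀ δ : ℝ, 0 < δ → ∃ y ∈ P.Bset C, |b - y| ≤ δ := by
    intro δ hδ
    obtain ⟨y, hyB', hyb⟩ := exists_lt_of_lt_csSup hB'ne (show b - δ < b by linarith)
    have hyle : y ≤ b := le_csSup hB'bdd hyB'
    exact ⟨y, hyB'.2.2 ⟨hyB'.1, le_rfl⟩, by rw [abs_le]; constructor <;> linarith⟩
  by_cases hzR : ∃ n, P.zseq C b n ∈ P.Δ
  · obtain ⟨n, hn⟩ := hzR
    exact P.goal_of_z_mem_Δ C hD hεpos hε happR hn
  push_neg at hzR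
  have hbB : b ∈ P.Bset C := P.mem_Bset_of_z_not_Δ C happR hzR
  have hIccR : ∀ y, x₀ ≤ y → y ≤ b → y ∈ P.Bset C := by
    intro y h1 h2
    rcases eq_or_lt_of_le h2 with he | hlt
    · rw [he]; exact hbB
    · obtain ⟨y', hy'B', hyy'⟩ := exists_lt_of_lt_csSup hB'ne hlt
      exact hy'B'.2.2 ⟨h1, hyy'.le⟩
  have hbeq : b = P.c P.N := by
    rcases eq_or_lt_of_le hbN with he | hlt
    · exact he
    · exfalso
      obtain ⟨δ, hδpos, hδ⟩ := P.bset_open C hεpos hε hbB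
      have hb' : min (b + δ) (P.c P.N) ∈ B' := by
        refine ⟨le_trans hx0b (le_min (by linarith) hbN), min_le_right _ _, ?_⟩
        intro y hy
        rcases le_or_gt y b with h | h
        · exact hIccR y hy.1 h
        · apply hδ y
          · exact ⟨le_trans hx0X.1 (le_trans hx0b h.le),
              le_trans hy.2 (min_le_right _ _)⟩
          · have hyb : y ≤ b + δ := le_trans hy.2 (min_le_left _ _)
            rw [abs_le]; constructor <;> linarith
      have hle := le_csSup hB'bdd hb'
      have hmin : b < min (b + δ) (P.c P.N) := lt_min (by linarith) hlt
      rw [← hb] at hle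
      linarith
  -- left side
  set A' : Set ℝ := {y | P.c 0 ≤ y ∧ y ≤ x₀ ∧ Set.Icc y x₀ ⊆ P.Bset C} with hA'
  have hx0A' : x₀ ∈ A' := ⟨hx0X.1, le_rfl, by
    rw [Set.Icc_self]
    intro z hz
    rw [Set.mem_singleton_iff.1 hz]
    exact hx0B⟩
  have hA'ne : A'.Nonempty := ⟨x₀, hx0A'⟩
  have hA'bdd : BddBelow A' := ⟨P.c 0, fun y hy => hy.1⟩
  set a := sInf A' with ha
  have hax0 : a ≤ x₀ := csInf_le hA'bdd hx0A'
  have ha0 : P.c 0 ≤ a := le_csInf hA'ne (fun y hy => hy.1)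
  have happL : ∀ δ : ℝ, 0 < δ → ∃ y ∈ P.Bset C, |a - y| ≤ δ := by
    intro δ hδ
    obtain ⟨y, hyA', hya⟩ := exists_lt_of_csInf_lt hA'ne (show a < a + δ by linarith)
    have hyge : a ≤ y := csInf_le hA'bdd hyA'
    exact ⟨y, hyA'.2.2 ⟨le_rfl, hyA'.2.1⟩, by rw [abs_le]; constructor <;> linarith⟩
  by_cases hzL : ∃ n, P.zseq C a n ∈ P.Δ
  · obtain ⟨n, hn⟩ := hzL
    exact P.goal_of_z_mem_Δ C hD hεpos hε happL hn
  push_neg at hzL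
  have haB : a ∈ P.Bset C := P.mem_Bset_of_z_not_Δ C happL hzL
  have hIccL : ∀ y, a ≤ y → y ≤ x₀ → y ∈ P.Bset C := by
    intro y h1 h2
    rcases eq_or_lt_of_le h1 with he | hlt
    · rw [← he]; exact haB
    · obtain ⟨y', hy'A', hy'y⟩ := exists_lt_of_csInf_lt hA'ne hlt
      exact hy'A'.2.2 ⟨hy'y.le, h2⟩
  have haeq : a = P.c 0 := by
    rcases eq_or_lt_of_le ha0 with he | hlt
    · exact he.symm
    · exfalso
      obtain ⟨δ, hδpos, hδ⟩ := P.bset_open C hεpos hε haB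
      have ha' : max (a - δ) (P.c 0) ∈ A' := by
        refine ⟨le_max_right _ _, max_le (by linarith) (by linarith), ?_⟩
        intro y hy
        rcases le_or_gt a y with h | h
        · exact hIccL y h hy.2
        · apply hδ y
          · exact ⟨le_trans (le_max_right _ _) hy.1,
              le_trans hy.2 hx0X.2⟩
          · have hya : a - δ ≤ y := le_trans (le_max_left _ _) hy.1
            rw [abs_le]; constructor <;> linarith
      have hle := csInf_le hA'bdd ha'
      have hmax : max (a - δ) (P.c 0) < a := max_lt (by linarith) hlt
      rw [← ha] at hle
      linarith
  -- conclusion: c 1 would share the itinerary, contradiction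
  exfalso
  have hN2 := P.hN
  have hc1X : P.c 0 ≤ P.c 1 ∧ P.c 1 ≤ P.c P.N :=
    ⟨P.c_le_c (by omega) (by omega), P.c_le_c (by omega) le_rfl⟩
  have hc1B : P.c 1 ∈ P.Bset C := by
    rcases le_total (P.c 1) x₀ with h | h
    · exact hIccL (P.c 1) (by rw [haeq]; exact hc1X.1) h
    · exact hIccR (P.c 1) h (by rw [hbeq]; exact hc1X.2)
  have hc1Δ : P.c 1 ∈ P.Δ := ⟨1, le_rfl, by omega, rfl⟩
  have h0 := hc1B 0
  simp only [Function.iterate_zero_apply] at h0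
  exact absurd hc1Δ (P.not_mem_Δ_of_mem_piece (C.hη1 0) (C.hη2 0) h0)
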